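/- Let N = n+m and suppose the square matrix [X; U] ∈ ℝ^{(n+m)×(n+m)} (X stacked on top of U) is invertible. Suppose there exist a symmetric P ∈ ℝ^{n×n} and τ > 0 such that the block matrix [[B_wᵀPB_w + τQ_w, −B_wᵀPX₊ + τS_w],[(−B_wᵀPX₊ + τS_w)ᵀ, M(P) + τR_w]] ⪯ 0 (negative semidefinite). Then every (A_d, B_d) ∈ Σ_{X,U} is such that the system x_{k+1} = A_d x_k + B_d u_k, y_k = C x_k + D u_k is (Q,S,R)-dissipative, with quadratic storage function V(x) = xᵀPx. -/

import Mathlib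

open Matrix

/-- `M ⪯ 0`: a real matrix is negative semidefinite iff `-M` is positive semidefinite. -/
def Matrix.NegSemidef {k : Type*} [Fintype k] (M : Matrix k k ℝ) : Prop :=
  (-M).PosSemidef

/-- Quadratic supply rate `s(u,y) = uᵀRu + uᵀSᵀy + yᵀSu + yᵀQy`. -/
noncomputable def supplyRate {m p : ℕ} (R : Matrix (Fin m) (Fin m) ℝ)
    (S : Matrix (Fin p) (Fin m) ℝ) (Q : Matrix (Fin p) (Fin p) ℝ)
    (u : Fin m → ℝ) (y : Fin p → ℝ) : ℝ :=
  u ⬝ᵥ R.mulVec u + u ⬝ᵥ Sᵀ.mulVec y + y ⬝ᵥ S.mulVec u + y ⬝ᵥ Q.mulVec y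

/-- The data-dependent matrix `M(P)` (columns indexed by an arbitrary finite type `ι`
of cardinality `N`). -/
noncomputable def dataMatrixM {n m p : ℕ} {ι : Type*} [Fintype ι]
    (C : Matrix (Fin p) (Fin n) ℝ) (D : Matrix (Fin p) (Fin m) ℝ)
    (R : Matrix (Fin m) (Fin m) ℝ) (S : Matrix (Fin p) (Fin m) ℝ)
    (Q : Matrix (Fin p) (Fin p) ℝ)
    (X Xp : Matrix (Fin n) ι ℝ) (U : Matrix (Fin m) ι ℝ)
    (P : Matrix (Fin n) (Fin n) ℝ) : Matrix ι ι ℝ :=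
  Xpᵀ * P * Xp - Xᵀ * P * X -
    (Uᵀ * R * U + Uᵀ * Sᵀ * (C * X + D * U) + (C * X + D * U)ᵀ * S * U
      + (C * X + D * U)ᵀ * Q * (C * X + D * U))

/-- Membership in the noise set `𝒲`. -/
def inNoiseSet {mw : ℕ} {ι : Type*} [Fintype ι]
    (Qw : Matrix (Fin mw) (Fin mw) ℝ) (Sw : Matrix (Fin mw) ι ℝ)
    (Rw : Matrix ι ι ℝ) (W : Matrix (Fin mw) ι ℝ) : Prop :=
  (Wᵀ * Qw * W + Wᵀ * Sw + Swᵀ * W + Rw).PosSemidef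

/-- Membership `(A_d, B_d) ∈ Σ_{X,U}`. -/
def inConsistentSet {n m mw : ℕ} {ι : Type*} [Fintype ι]
    (X Xp : Matrix (Fin n) ι ℝ) (U : Matrix (Fin m) ι ℝ)
    (Bw : Matrix (Fin n) (Fin mw) ℝ)
    (Qw : Matrix (Fin mw) (Fin mw) ℝ) (Sw : Matrix (Fin mw) ι ℝ)
    (Rw : Matrix ι ι ℝ)
    (Ad : Matrix (Fin n) (Fin n) ℝ) (Bd : Matrix (Fin n) (Fin m) ℝ) : Prop :=
  ∃ W : Matrix (Fin mw) ι ℝ,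
    inNoiseSet Qw Sw Rw W ∧ Xp = Ad * X + Bd * U + Bw * W

/-! Fix a state `x` and input `u`. Since `[X; U]` is invertible, `(x, u) = (X ξ, U ξ)` for some
`ξ`, and with `w = W ξ` the consistency relation gives `A_d x + B_d u = X₊ ξ - B_w w`. Evaluating
the LMI at `(w, ξ)` and adding `τ` times the noise inequality `ξᵀ(WᵀQ_wW + WᵀS_w + S_wᵀW + R_w)ξ ≥ 0`
leaves exactly the one-step dissipation inequality
`V(A_d x + B_d u) - V(x) ≤ s(u, C x + D u)` for `V(x) = xᵀPx`, which telescopes along trajectories. -/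

section QuadraticForms

variable {R : Type*} [CommSemiring R] {α β γ δ : Type*} [Fintype α] [Fintype β] [Fintype γ]
  [Fintype δ]

lemma dotProduct_transpose_mul_mulVec (A : Matrix α β R) (B : Matrix α γ R) (v : β → R)
    (w : γ → R) : v ⬝ᵥ (Aᵀ * B) *ᵥ w = (A *ᵥ v) ⬝ᵥ B *ᵥ w := by
  rw [← mulVec_mulVec, dotProduct_mulVec, vecMul_transpose]

lemma dotProduct_transpose_mul_mul_mulVec (A : Matrix α β R) (M : Matrix α δ R)
    (B : Matrix δ γ R) (v : β → R) (w : γ → R) :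
    v ⬝ᵥ (Aᵀ * M * B) *ᵥ w = (A *ᵥ v) ⬝ᵥ M *ᵥ (B *ᵥ w) := by
  rw [Matrix.mul_assoc, dotProduct_transpose_mul_mulVec, ← mulVec_mulVec]

lemma dotProduct_transpose_mulVec_comm (A : Matrix α β R) (v : α → R) (w : β → R) :
    w ⬝ᵥ Aᵀ *ᵥ v = v ⬝ᵥ A *ᵥ w := by
  rw [dotProduct_mulVec, vecMul_transpose, dotProduct_comm]

lemma sumElim_dotProduct_fromBlocks_transpose_mulVec (A : Matrix α α R) (B : Matrix α β R)
    (D : Matrix β β R) (v : α → R) (w : β → R) :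
    Sum.elim v w ⬝ᵥ fromBlocks A B Bᵀ D *ᵥ Sum.elim v w
      = v ⬝ᵥ A *ᵥ v + 2 * (v ⬝ᵥ B *ᵥ w) + w ⬝ᵥ D *ᵥ w := by
  simp only [fromBlocks_mulVec, Sum.elim_comp_inl, Sum.elim_comp_inr, sumElim_dotProduct_sumElim,
    dotProduct_add, dotProduct_transpose_mulVec_comm]
  ring

end QuadraticForms

lemma Matrix.NegSemidef.dotProduct_mulVec_nonpos {k : Type*} [Fintype k] {M : Matrix k k ℝ}
    (hM : M.NegSemidef) (v : k → ℝ) : v ⬝ᵥ M *ᵥ v ≤ 0 := by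
  have := hM.dotProduct_mulVec_nonneg v
  simp only [star_trivial, neg_mulVec, dotProduct_neg] at this
  linarith

lemma exists_mulVec_eq_of_isUnit_fromRows {K : Type*} [CommRing K] {α β : Type*} [Fintype α]
    [Fintype β] [DecidableEq α] [DecidableEq β] {X : Matrix α (α ⊕ β) K} {U : Matrix β (α ⊕ β) K}
    (hXU : IsUnit (fromRows X U)) (x : α → K) (u : β → K) :
    ∃ ξ, X *ᵥ ξ = x ∧ U *ᵥ ξ = u := by
  obtain ⟨ξ, hξ⟩ := mulVec_surjective_iff_isUnit.mpr hXU (Sum.elim x u)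
  rw [fromRows_mulVec] at hξ
  exact ⟨ξ, congrArg (· ∘ Sum.inl) hξ, congrArg (· ∘ Sum.inr) hξ⟩

lemma sub_le_sum_Ico_of_forall_succ_sub_le {G : Type*} [AddCommGroup G] [PartialOrder G]
    [IsOrderedAddMonoid G] {v s : ℕ → G} (h : ∀ k, v (k + 1) - v k ≤ s k) {k₂ k₁ : ℕ}
    (hk : k₂ ≤ k₁) : v k₁ - v k₂ ≤ ∑ i ∈ Finset.Ico k₂ k₁, s i := by
  rw [← Finset.sum_Ico_sub (f := v) hk]
  exact Finset.sum_le_sum fun i _ ↦ h i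

section DataDrivenDissipativity

variable {n m p mw : ℕ} {ι : Type*} [Fintype ι]
  {C : Matrix (Fin p) (Fin n) ℝ} {D : Matrix (Fin p) (Fin m) ℝ}
  {R : Matrix (Fin m) (Fin m) ℝ} {S : Matrix (Fin p) (Fin m) ℝ} {Q : Matrix (Fin p) (Fin p) ℝ}
  {X Xp : Matrix (Fin n) ι ℝ} {U : Matrix (Fin m) ι ℝ} {Bw : Matrix (Fin n) (Fin mw) ℝ}
  {Qw : Matrix (Fin mw) (Fin mw) ℝ} {Sw : Matrix (Fin mw) ι ℝ} {Rw : Matrix ι ι ℝ}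
  {W : Matrix (Fin mw) ι ℝ} {P : Matrix (Fin n) (Fin n) ℝ}

lemma dotProduct_dataMatrixM_mulVec (ξ : ι → ℝ) :
    ξ ⬝ᵥ dataMatrixM C D R S Q X Xp U P *ᵥ ξ
      = (Xp *ᵥ ξ) ⬝ᵥ P *ᵥ (Xp *ᵥ ξ) - (X *ᵥ ξ) ⬝ᵥ P *ᵥ (X *ᵥ ξ)
        - supplyRate R S Q (U *ᵥ ξ) (C *ᵥ (X *ᵥ ξ) + D *ᵥ (U *ᵥ ξ)) := by
  have hY : (C * X + D * U) *ᵥ ξ = C *ᵥ (X *ᵥ ξ) + D *ᵥ (U *ᵥ ξ) := by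
    rw [add_mulVec, mulVec_mulVec, mulVec_mulVec]
  simp only [dataMatrixM, sub_mulVec, add_mulVec, dotProduct_sub, dotProduct_add,
    dotProduct_transpose_mul_mul_mulVec, hY, supplyRate]

lemma inNoiseSet.dotProduct_mulVec_nonneg (hW : inNoiseSet Qw Sw Rw W) (ξ : ι → ℝ) :
    0 ≤ (W *ᵥ ξ) ⬝ᵥ Qw *ᵥ (W *ᵥ ξ) + 2 * ((W *ᵥ ξ) ⬝ᵥ Sw *ᵥ ξ) + ξ ⬝ᵥ Rw *ᵥ ξ := by
  have := PosSemidef.dotProduct_mulVec_nonneg hW ξ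
  simp only [star_trivial, add_mulVec, dotProduct_add, dotProduct_transpose_mul_mul_mulVec,
    dotProduct_transpose_mul_mulVec] at this
  linarith [dotProduct_comm (Sw *ᵥ ξ) (W *ᵥ ξ)]

theorem quadratic_step_le_supplyRate_of_lmi (hP : P.IsSymm) {τ : ℝ} (hτ : 0 ≤ τ)
    (hLMI : (fromBlocks (Bwᵀ * P * Bw + τ • Qw) (-(Bwᵀ * P * Xp) + τ • Sw)
        (-(Bwᵀ * P * Xp) + τ • Sw)ᵀ (dataMatrixM C D R S Q X Xp U P + τ • Rw)).NegSemidef)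
    {Ad : Matrix (Fin n) (Fin n) ℝ} {Bd : Matrix (Fin n) (Fin m) ℝ}
    (hW : inNoiseSet Qw Sw Rw W) (hXp : Xp = Ad * X + Bd * U + Bw * W) (ξ : ι → ℝ) :
    (Ad *ᵥ (X *ᵥ ξ) + Bd *ᵥ (U *ᵥ ξ)) ⬝ᵥ P *ᵥ (Ad *ᵥ (X *ᵥ ξ) + Bd *ᵥ (U *ᵥ ξ))
        - (X *ᵥ ξ) ⬝ᵥ P *ᵥ (X *ᵥ ξ)
      ≤ supplyRate R S Q (U *ᵥ ξ) (C *ᵥ (X *ᵥ ξ) + D *ᵥ (U *ᵥ ξ)) := by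
  set w := W *ᵥ ξ
  have hnext : Ad *ᵥ (X *ᵥ ξ) + Bd *ᵥ (U *ᵥ ξ) = Xp *ᵥ ξ - Bw *ᵥ w := by
    simp only [hXp, add_mulVec, mulVec_mulVec, w]
    abel
  have hPsymm : (Xp *ᵥ ξ) ⬝ᵥ P *ᵥ (Bw *ᵥ w) = (Bw *ᵥ w) ⬝ᵥ P *ᵥ (Xp *ᵥ ξ) := by
    have := dotProduct_transpose_mulVec_comm P (Bw *ᵥ w) (Xp *ᵥ ξ)
    rwa [hP.eq] at this
  have hlmi := hLMI.dotProduct_mulVec_nonpos (Sum.elim w ξ)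
  rw [sumElim_dotProduct_fromBlocks_transpose_mulVec] at hlmi
  simp only [add_mulVec, neg_mulVec, smul_mulVec, dotProduct_add, dotProduct_neg,
    dotProduct_smul, smul_eq_mul, dotProduct_transpose_mul_mul_mulVec,
    dotProduct_dataMatrixM_mulVec] at hlmi
  rw [hnext, mulVec_sub, dotProduct_sub, sub_dotProduct, sub_dotProduct]
  linarith [mul_nonneg hτ (hW.dotProduct_mulVec_nonneg ξ)]

end DataDrivenDissipativity

theorem square_data_noise_lmi_implies_robust_dissipativity_general {n m p mw : ℕ}
    (C : Matrix (Fin p) (Fin n) ℝ) (D : Matrix (Fin p) (Fin m) ℝ)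
    (R : Matrix (Fin m) (Fin m) ℝ) (S : Matrix (Fin p) (Fin m) ℝ)
    (Q : Matrix (Fin p) (Fin p) ℝ)
    (X Xp : Matrix (Fin n) (Fin n ⊕ Fin m) ℝ)
    (U : Matrix (Fin m) (Fin n ⊕ Fin m) ℝ)
    (Bw : Matrix (Fin n) (Fin mw) ℝ)
    (Qw : Matrix (Fin mw) (Fin mw) ℝ)
    (Sw : Matrix (Fin mw) (Fin n ⊕ Fin m) ℝ)
    (Rw : Matrix (Fin n ⊕ Fin m) (Fin n ⊕ Fin m) ℝ)
    (hH : IsUnit (Matrix.fromRows X U))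
    (P : Matrix (Fin n) (Fin n) ℝ) (hP : P.IsSymm) (τ : ℝ) (hτ : 0 < τ)
    (hLMI : (Matrix.fromBlocks
        (Bwᵀ * P * Bw + τ • Qw) (-(Bwᵀ * P * Xp) + τ • Sw)
        (-(Bwᵀ * P * Xp) + τ • Sw)ᵀ
        (dataMatrixM C D R S Q X Xp U P + τ • Rw)).NegSemidef) :
    ∀ (Ad : Matrix (Fin n) (Fin n) ℝ) (Bd : Matrix (Fin n) (Fin m) ℝ),
      inConsistentSet X Xp U Bw Qw Sw Rw Ad Bd →
      ∀ (u : ℕ → Fin m → ℝ) (x : ℕ → Fin n → ℝ),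
        (∀ k : ℕ, x (k + 1) = Ad.mulVec (x k) + Bd.mulVec (u k)) →
        ∀ k₂ k₁ : ℕ, k₂ < k₁ →
          (x k₁) ⬝ᵥ P.mulVec (x k₁) - (x k₂) ⬝ᵥ P.mulVec (x k₂)
            ≤ ∑ i ∈ Finset.Ico k₂ k₁,
                supplyRate R S Q (u i) (C.mulVec (x i) + D.mulVec (u i)) := by
  rintro Ad Bd ⟨W, hW, hXp⟩ u x hdyn k₂ k₁ hk
  have hstep : ∀ k, x (k + 1) ⬝ᵥ P *ᵥ x (k + 1) - x k ⬝ᵥ P *ᵥ x k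
      ≤ supplyRate R S Q (u k) (C *ᵥ x k + D *ᵥ u k) := fun k ↦ by
    obtain ⟨ξ, hXξ, hUξ⟩ := exists_mulVec_eq_of_isUnit_fromRows hH (x k) (u k)
    rw [hdyn k, ← hXξ, ← hUξ]
    exact quadratic_step_le_supplyRate_of_lmi hP hτ.le hLMI hW hXp ξ
  exact sub_le_sum_Ico_of_forall_succ_sub_le (v := fun k ↦ x k ⬝ᵥ P *ᵥ x k) hstep hk.le

theorem square_data_noise_lmi_implies_robust_dissipativity {n m p mw : ℕ}
    (C : Matrix (Fin p) (Fin n) ℝ) (D : Matrix (Fin p) (Fin m) ℝ)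
    (R : Matrix (Fin m) (Fin m) ℝ) (S : Matrix (Fin p) (Fin m) ℝ)
    (Q : Matrix (Fin p) (Fin p) ℝ) (hR : R.IsSymm) (hQ : Q.IsSymm)
    (X Xp : Matrix (Fin n) (Fin n ⊕ Fin m) ℝ)
    (U : Matrix (Fin m) (Fin n ⊕ Fin m) ℝ)
    (Bw : Matrix (Fin n) (Fin mw) ℝ)
    (Qw : Matrix (Fin mw) (Fin mw) ℝ)
    (Sw : Matrix (Fin mw) (Fin n ⊕ Fin m) ℝ)
    (Rw : Matrix (Fin n ⊕ Fin m) (Fin n ⊕ Fin m) ℝ)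
    (hQw : Qw.IsSymm) (hRw : Rw.PosDef)
    (hH : IsUnit (Matrix.fromRows X U))
    (P : Matrix (Fin n) (Fin n) ℝ) (hP : P.IsSymm) (τ : ℝ) (hτ : 0 < τ)
    (hLMI : (Matrix.fromBlocks
        (Bwᵀ * P * Bw + τ • Qw) (-(Bwᵀ * P * Xp) + τ • Sw)
        (-(Bwᵀ * P * Xp) + τ • Sw)ᵀ
        (dataMatrixM C D R S Q X Xp U P + τ • Rw)).NegSemidef) :
    ∀ (Ad : Matrix (Fin n) (Fin n) ℝ) (Bd : Matrix (Fin n) (Fin m) ℝ),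
      inConsistentSet X Xp U Bw Qw Sw Rw Ad Bd →
      ∀ (u : ℕ → Fin m → ℝ) (x : ℕ → Fin n → ℝ),
        (∀ k : ℕ, x (k + 1) = Ad.mulVec (x k) + Bd.mulVec (u k)) →
        ∀ k₂ k₁ : ℕ, k₂ < k₁ →
          (x k₁) ⬝ᵥ P.mulVec (x k₁) - (x k₂) ⬝ᵥ P.mulVec (x k₂)
            ≤ ∑ i ∈ Finset.Ico k₂ k₁,
                supplyRate R S Q (u i) (C.mulVec (x i) + D.mulVec (u i)) :=
  square_data_noise_lmi_implies_robust_dissipativity_general C D R S Q X Xp U Bw Qw Sw Rw hH P hP τ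
    hτ hLMI
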